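/- arXiv:2411.17915 — 7 statements merged into one kernel-verified Lean document; each statement's English description precedes it below -/
import Mathlib

section
/- Let X and Y be integrable real-valued random variables on a common probability space (Ω, P) and let α ∈ (0,1]. Then the lower-tail Conditional Value-at-Risk is superadditive: CVaR_α(X + Y) ≥ CVaR_α(X) + CVaR_α(Y). -/
open MeasureTheory

/-- The `u`-quantile of a real random variable `Z` under `P`:
`q_u(Z) = inf {y : P(Z ≤ y) ≥ u}`. -/
noncomputable def lowerQuantile {Ω : Type*} [MeasurableSpace Ω] (P : Measure Ω)
    (Z : Ω → ℝ) (u : ℝ) : ℝ :=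
  sInf {y : ℝ | u ≤ (P {ω | Z ω ≤ y}).toReal}

/-- The lower-tail `α`-confidence Conditional Value-at-Risk:
`CVaR_α(Z) = (1/α) ∫₀^α q_u(Z) du`. -/
noncomputable def cvar {Ω : Type*} [MeasurableSpace Ω] (P : Measure Ω)
    (Z : Ω → ℝ) (α : ℝ) : ℝ :=
  (1 / α) * ∫ u in (0:ℝ)..α, lowerQuantile P Z u

/-!
The Rockafellar–Uryasev formula `α · CVaR_α(Z) = sup_c (α c - E[(c - Z)⁺])` reduces
superadditivity to the pointwise bound `(c₁ + c₂ - X - Y)⁺ ≤ (c₁ - X)⁺ + (c₂ - Y)⁺`. For the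
formula, Lebesgue measure on `(0, 1)` pushed forward along the quantile function `q` of `Z` is the
law of `Z`, so
`E[(c - Z)⁺] = ∫₀¹ (c - q)⁺ ≥ ∫₀^α (c - q)`; for `c = q t` with `t < α` the functional equals
`(α - t) q t + ∫₀^t q`, which tends to `∫₀^α q` as `t ↑ α`.
-/

open Set Filter Topology ProbabilityTheory

section Quantile

variable (μ : Measure ℝ) [IsProbabilityMeasure μ]

theorem lowerQuantile_id_le_iff {u y : ℝ} (hu : u ∈ Ioo 0 1) :
    lowerQuantile μ id u ≤ y ↔ u ≤ cdf μ y := by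
  have hS : {y : ℝ | u ≤ (μ {x | id x ≤ y}).toReal} = {y | u ≤ cdf μ y} := by
    ext y
    simp [cdf_eq_real, measureReal_def, Iic]
  rw [lowerQuantile, hS]
  obtain ⟨y₀, hy₀⟩ := ((tendsto_cdf_atBot μ).eventually (eventually_lt_nhds hu.1)).exists
  have hbdd : BddBelow {y | u ≤ cdf μ y} :=
    ⟨y₀, fun z hz => le_of_not_gt fun hzy => (hz.trans (monotone_cdf μ hzy.le)).not_gt hy₀⟩
  obtain ⟨y₁, hy₁⟩ := ((tendsto_cdf_atTop μ).eventually (eventually_ge_nhds hu.2)).exists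
  set q := sInf {y | u ≤ cdf μ y}
  -- by right-continuity of the cdf, the infimum belongs to the set
  have hq : u ≤ cdf μ q := by
    refine ge_of_tendsto (((cdf μ).right_continuous q).mono_left
      (nhdsWithin_mono _ Ioi_subset_Ici_self)) ?_
    filter_upwards [self_mem_nhdsWithin] with y hy
    obtain ⟨z, hz, hzy⟩ := exists_lt_of_csInf_lt ⟨y₁, hy₁⟩ (mem_Ioi.1 hy)
    exact hz.trans (monotone_cdf μ hzy.le)
  exact ⟨fun h => hq.trans (monotone_cdf μ h), fun h => csInf_le hbdd h⟩

theorem monotoneOn_lowerQuantile_id : MonotoneOn (lowerQuantile μ id) (Ioo 0 1) :=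
  fun _ hu _ hv huv => (lowerQuantile_id_le_iff μ hu).2 <|
    huv.trans ((lowerQuantile_id_le_iff μ hv).1 le_rfl)

theorem aemeasurable_lowerQuantile_id :
    AEMeasurable (lowerQuantile μ id) (volume.restrict (Ioo 0 1)) :=
  aemeasurable_restrict_of_monotoneOn measurableSet_Ioo (monotoneOn_lowerQuantile_id μ)

theorem map_lowerQuantile_id_restrict_Ioo :
    (volume.restrict (Ioo 0 1)).map (lowerQuantile μ id) = μ := by
  have hq := aemeasurable_lowerQuantile_id μ
  have : IsProbabilityMeasure (volume.restrict (Ioo (0 : ℝ) 1)) := ⟨by simp⟩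
  have : IsProbabilityMeasure ((volume.restrict (Ioo 0 1)).map (lowerQuantile μ id)) :=
    Measure.isProbabilityMeasure_map hq
  refine Measure.ext_of_Iic _ _ fun a => ?_
  have hpre : lowerQuantile μ id ⁻¹' Iic a ∩ Ioo 0 1 = Ioo 0 1 ∩ Iic (cdf μ a) := by
    ext u
    simp only [mem_inter_iff, mem_preimage, mem_Iic]
    exact ⟨fun h => ⟨h.2, (lowerQuantile_id_le_iff μ h.2).1 h.1⟩,
      fun h => ⟨(lowerQuantile_id_le_iff μ h.1).2 h.2, h.1⟩⟩
  rw [Measure.map_apply_of_aemeasurable hq measurableSet_Iic,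
    Measure.restrict_apply' measurableSet_Ioo, hpre,
    measure_congr ((Ioo_ae_eq_Ioc (μ := volume)).inter (ae_eq_refl (Iic (cdf μ a)))),
    Ioc_inter_Iic, min_eq_right (cdf_le_one μ a), Real.volume_Ioc, sub_zero, ofReal_cdf]

theorem integral_comp_lowerQuantile_id {E : Type*} [NormedAddCommGroup E] [NormedSpace ℝ E]
    {g : ℝ → E} (hg : AEStronglyMeasurable g μ) :
    ∫ u in Ioo 0 1, g (lowerQuantile μ id u) = ∫ x, g x ∂μ := by
  have hq := aemeasurable_lowerQuantile_id μ
  rw [← integral_map hq, map_lowerQuantile_id_restrict_Ioo]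
  rwa [map_lowerQuantile_id_restrict_Ioo]

theorem integrableOn_lowerQuantile_id (hμ : Integrable id μ) :
    IntegrableOn (lowerQuantile μ id) (Ioo 0 1) := by
  have hq := aemeasurable_lowerQuantile_id μ
  rw [← map_lowerQuantile_id_restrict_Ioo μ] at hμ
  exact (integrable_map_measure aestronglyMeasurable_id hq).1 hμ

end Quantile

theorem tendsto_setIntegral_Ioo_nhdsWithin {f : ℝ → ℝ} {a b : ℝ} (hab : a ≤ b)
    (hf : IntegrableOn f (Ioo a b)) :
    Tendsto (fun t => ∫ u in Ioo a t, f u) (𝓝[Ioo a b] b) (𝓝 (∫ u in Ioo a b, f u)) := by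
  have hcont := intervalIntegral.continuousOn_primitive
    ((integrableOn_Icc_iff_integrableOn_Ioo).2 hf)
  simpa only [integral_Ioc_eq_integral_Ioo] using
    ((hcont b (right_mem_Icc.2 hab)).mono Ioo_subset_Icc_self).tendsto

section RockafellarUryasev

variable (μ : Measure ℝ) [IsProbabilityMeasure μ]

theorem setIntegral_Ioo_const_sub_lowerQuantile_id (hμ : Integrable id μ) {s : ℝ}
    (hs : s ∈ Ioc 0 1) (c : ℝ) :
    ∫ u in Ioo 0 s, (c - lowerQuantile μ id u) = s * c - ∫ u in Ioo 0 s, lowerQuantile μ id u := by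
  rw [integral_sub (integrableOn_const (C := c) (s := Ioo 0 s) measure_Ioo_lt_top.ne)
      ((integrableOn_lowerQuantile_id μ hμ).mono_set (Ioo_subset_Ioo_right hs.2)),
    setIntegral_const, Real.volume_real_Ioo_of_le hs.1.le, sub_zero, smul_eq_mul]

theorem integrableOn_posPart_const_sub_lowerQuantile_id (hμ : Integrable id μ) (c : ℝ) :
    IntegrableOn (fun u => max (c - lowerQuantile μ id u) 0) (Ioo 0 1) :=
  ((integrableOn_const measure_Ioo_lt_top.ne).sub (integrableOn_lowerQuantile_id μ hμ)).pos_part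

theorem integral_posPart_const_sub_eq_setIntegral (c : ℝ) :
    ∫ x, max (c - x) 0 ∂μ = ∫ u in Ioo 0 1, max (c - lowerQuantile μ id u) 0 :=
  (integral_comp_lowerQuantile_id μ
    ((continuous_const.sub continuous_id).max continuous_const).aestronglyMeasurable).symm

theorem mul_sub_integral_posPart_le (hμ : Integrable id μ) {α : ℝ} (hα : α ∈ Ioc 0 1) (c : ℝ) :
    α * c - ∫ x, max (c - x) 0 ∂μ ≤ ∫ u in Ioo 0 α, lowerQuantile μ id u := by
  have hpos := integrableOn_posPart_const_sub_lowerQuantile_id μ hμ c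
  have hsub : Ioo 0 α ⊆ Ioo (0 : ℝ) 1 := Ioo_subset_Ioo_right hα.2
  have key : ∫ u in Ioo 0 α, (c - lowerQuantile μ id u) ≤ ∫ x, max (c - x) 0 ∂μ := calc
    _ ≤ ∫ u in Ioo 0 α, max (c - lowerQuantile μ id u) 0 :=
      setIntegral_mono ((integrableOn_const measure_Ioo_lt_top.ne).sub
        ((integrableOn_lowerQuantile_id μ hμ).mono_set hsub)) (hpos.mono_set hsub)
        fun _ => le_max_left _ _
    _ ≤ ∫ u in Ioo 0 1, max (c - lowerQuantile μ id u) 0 :=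
      setIntegral_mono_set hpos (.of_forall fun _ => le_max_right _ _) hsub.eventuallyLE
    _ = _ := (integral_posPart_const_sub_eq_setIntegral μ c).symm
  rw [setIntegral_Ioo_const_sub_lowerQuantile_id μ hμ hα] at key
  linarith

theorem integral_posPart_lowerQuantile_id_sub (hμ : Integrable id μ) {t : ℝ} (ht : t ∈ Ioo 0 1) :
    ∫ x, max (lowerQuantile μ id t - x) 0 ∂μ
      = t * lowerQuantile μ id t - ∫ u in Ioo 0 t, lowerQuantile μ id u := by
  set c := lowerQuantile μ id t
  have hpos := integrableOn_posPart_const_sub_lowerQuantile_id μ hμ c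
  have hbelow : ∫ u in Ioo 0 t, max (c - lowerQuantile μ id u) 0
      = ∫ u in Ioo 0 t, (c - lowerQuantile μ id u) :=
    setIntegral_congr_fun measurableSet_Ioo fun u hu => max_eq_left <| sub_nonneg.2 <|
      monotoneOn_lowerQuantile_id μ ⟨hu.1, hu.2.trans ht.2⟩ ht hu.2.le
  have habove : ∫ u in Ico t 1, max (c - lowerQuantile μ id u) 0 = 0 := by
    rw [setIntegral_congr_fun measurableSet_Ico (g := fun _ => 0), integral_zero]
    exact fun u hu => max_eq_right <| sub_nonpos.2 <|
      monotoneOn_lowerQuantile_id μ ht ⟨ht.1.trans_le hu.1, hu.2⟩ hu.1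
  rw [integral_posPart_const_sub_eq_setIntegral μ, ← Ioo_union_Ico_eq_Ioo ht.1 ht.2.le,
    setIntegral_union (Ico_disjoint_Ico_same.mono_left Ioo_subset_Ico_self) measurableSet_Ico
      (hpos.mono_set (Ioo_subset_Ioo_right ht.2.le)) (hpos.mono_set (Ico_subset_Ioo_left ht.1)),
    hbelow, habove, add_zero, setIntegral_Ioo_const_sub_lowerQuantile_id μ hμ ⟨ht.1, ht.2.le⟩]

theorem isLUB_mul_sub_integral_posPart (hμ : Integrable id μ) {α : ℝ} (hα : α ∈ Ioc 0 1) :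
    IsLUB (range fun c => α * c - ∫ x, max (c - x) 0 ∂μ)
      (∫ u in Ioo 0 α, lowerQuantile μ id u) := by
  refine ⟨forall_mem_range.2 (mul_sub_integral_posPart_le μ hμ hα), fun b hb => ?_⟩
  -- `q t ≥ q (α / 2)` bounds the functional at `c = q t` from below continuously in `t`
  have hb' : ∀ t ∈ Ioo (α / 2) α, (∫ u in Ioo 0 t, lowerQuantile μ id u)
      + (α - t) * lowerQuantile μ id (α / 2) ≤ b := by
    intro t ht
    have ht1 : t ∈ Ioo 0 1 := ⟨by linarith [hα.1, ht.1], ht.2.trans_le hα.2⟩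
    have hmono :=
      monotoneOn_lowerQuantile_id μ ⟨by linarith [hα.1], by linarith [hα.2]⟩ ht1 ht.1.le
    have : α * lowerQuantile μ id t - ∫ x, max (lowerQuantile μ id t - x) 0 ∂μ ≤ b :=
      hb ⟨lowerQuantile μ id t, rfl⟩
    rw [integral_posPart_lowerQuantile_id_sub μ hμ ht1] at this
    nlinarith [ht.2]
  have hlin : Tendsto (fun t => (α - t) * lowerQuantile μ id (α / 2)) (𝓝[Ioo 0 α] α)
      (𝓝 ((α - α) * lowerQuantile μ id (α / 2))) :=
    (((continuous_const.sub continuous_id).mul continuous_const).tendsto α).mono_left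
      nhdsWithin_le_nhds
  have hlim := (tendsto_setIntegral_Ioo_nhdsWithin hα.1.le
    ((integrableOn_lowerQuantile_id μ hμ).mono_set (Ioo_subset_Ioo_right hα.2))).add hlin
  rw [sub_self, zero_mul, add_zero] at hlim
  have : (𝓝[Ioo 0 α] α).NeBot := right_nhdsWithin_Ioo_neBot hα.1
  refine le_of_tendsto hlim ?_
  filter_upwards [nhdsWithin_mono _ Ioo_subset_Iio_self
    (Ioo_mem_nhdsLT (by linarith [hα.1] : α / 2 < α))] with t ht
  exact hb' t ht

end RockafellarUryasev

section RandomVariable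

variable {Ω : Type*} [MeasurableSpace Ω] (P : Measure Ω)

theorem lowerQuantile_eq_lowerQuantile_map_id {Z : Ω → ℝ} (hZ : AEMeasurable Z P) :
    lowerQuantile P Z = lowerQuantile (P.map Z) id := by
  ext u
  unfold lowerQuantile
  congr! 4 with y
  exact congrArg ENNReal.toReal (Measure.map_apply_of_aemeasurable hZ measurableSet_Iic).symm

theorem isLUB_mul_sub_integral_posPart_cvar [IsProbabilityMeasure P] {Z : Ω → ℝ}
    (hZ : Integrable Z P) {α : ℝ} (hα : α ∈ Ioc 0 1) :
    IsLUB (range fun c => α * c - ∫ ω, max (c - Z ω) 0 ∂P) (α * cvar P Z α) := by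
  have hZm := hZ.aemeasurable
  have : IsProbabilityMeasure (P.map Z) := Measure.isProbabilityMeasure_map hZm
  have hid : Integrable id (P.map Z) :=
    (integrable_map_measure aestronglyMeasurable_id hZm).2 hZ
  have hcvar : α * cvar P Z α = ∫ u in Ioo 0 α, lowerQuantile (P.map Z) id u := by
    rw [cvar, ← mul_assoc, mul_one_div_cancel hα.1.ne', one_mul,
      intervalIntegral.integral_of_le hα.1.le, integral_Ioc_eq_integral_Ioo,
      lowerQuantile_eq_lowerQuantile_map_id P hZm]
  have hpos (c : ℝ) : ∫ ω, max (c - Z ω) 0 ∂P = ∫ x, max (c - x) 0 ∂(P.map Z) :=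
    (integral_map hZm ((continuous_const.sub continuous_id).max
      continuous_const).aestronglyMeasurable).symm
  simp_rw [hcvar, hpos]
  exact isLUB_mul_sub_integral_posPart (P.map Z) hid hα

theorem integral_posPart_sub_add_le [IsFiniteMeasure P] {X Y : Ω → ℝ} (hX : Integrable X P)
    (hY : Integrable Y P) (c₁ c₂ : ℝ) :
    ∫ ω, max (c₁ + c₂ - (X ω + Y ω)) 0 ∂P
      ≤ ∫ ω, max (c₁ - X ω) 0 ∂P + ∫ ω, max (c₂ - Y ω) 0 ∂P := by
  have hXp : Integrable (fun ω => max (c₁ - X ω) 0) P := ((integrable_const c₁).sub hX).pos_part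
  have hYp : Integrable (fun ω => max (c₂ - Y ω) 0) P := ((integrable_const c₂).sub hY).pos_part
  rw [← integral_add hXp hYp]
  refine integral_mono ((integrable_const _).sub (hX.add hY)).pos_part (hXp.add hYp) fun ω => ?_
  exact max_le (by linarith [le_max_left (c₁ - X ω) 0, le_max_left (c₂ - Y ω) 0])
    (add_nonneg (le_max_right _ _) (le_max_right _ _))

end RandomVariable

theorem stmt2 {Ω : Type*} [MeasurableSpace Ω] (P : Measure Ω) [IsProbabilityMeasure P]
    (X Y : Ω → ℝ) (hX : Integrable X P) (hY : Integrable Y P)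
    (α : ℝ) (hα : α ∈ Set.Ioc (0:ℝ) 1) :
    cvar P (fun ω => X ω + Y ω) α ≥ cvar P X α + cvar P Y α := by
  have hsum := isLUB_mul_sub_integral_posPart_cvar P (Z := fun ω => X ω + Y ω) (hX.add hY) hα
  suffices α * cvar P X α + α * cvar P Y α ≤ α * cvar P (fun ω => X ω + Y ω) α by
    rw [← mul_add] at this
    exact le_of_mul_le_mul_left this hα.1
  rw [← (isLUB_mul_sub_integral_posPart_cvar P hX hα).ciSup_eq,
    ← (isLUB_mul_sub_integral_posPart_cvar P hY hα).ciSup_eq]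
  refine ciSup_add_ciSup_le fun c₁ c₂ => le_trans ?_ (hsum.1 ⟨c₁ + c₂, rfl⟩)
  dsimp only
  linarith [integral_posPart_sub_add_le P hX hY c₁ c₂]
end

section
/- Let Z be an integrable real-valued random variable on a probability space (Ω, P) and let α ∈ (0,1]. If P(Z ≤ q_α(Z)) = α (which holds in particular when the cumulative distribution function of Z is continuous), then (1/α)∫₀^α q_u(Z) du = (1/α)·E[Z·1_{Z ≤ q_α(Z)}]; that is, the lower-tail CVaR equals the conditional expectation E[Z | Z ≤ q_α(Z)]. -/
open MeasureTheory

/-!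
Quantile transform: under Lebesgue measure on `(0, 1)` the quantile function `q` of a law `μ`
is distributed as `μ`, because `q u ≤ y ↔ u ≤ F y` for the cdf `F`. For `c = q α` with
`F c = α` the same equivalence identifies `{u ∈ (0, 1) | u ≤ α}` with `q⁻¹' (-∞, c]`, so
`∫₀^α q = ∫_{(-∞, c]} x dμ`, and with `μ` the law of `Z` this is `E[Z 1_{Z ≤ c}]`.
-/

open Set Filter
open scoped Topology

lemma Iic_inter_Ioo_ae_eq_Ioc {t : ℝ} (ht : t ≤ 1) :
    (Iic t ∩ Ioo 0 1 : Set ℝ) =ᵐ[volume] Ioc 0 t := by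
  have h : (Ioo 0 1 ∩ Iic t : Set ℝ) =ᵐ[volume] (Ioc 0 1 ∩ Iic t : Set ℝ) :=
    Ioo_ae_eq_Ioc.inter (ae_eq_refl _)
  rwa [inter_comm, Ioc_inter_Iic, min_eq_right ht] at h

namespace ProbabilityTheory

/-- Only `u ∈ (0, 1)` is meaningful: for `u ≤ 0` the defining set is all of `ℝ` and `sInf`
returns the junk value `0`. -/
noncomputable def quantile (μ : Measure ℝ) (u : ℝ) : ℝ :=
  sInf {y | u ≤ cdf μ y}

variable (μ : Measure ℝ)

lemma bddBelow_setOf_le_cdf {u : ℝ} (hu : 0 < u) : BddBelow {y | u ≤ cdf μ y} := by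
  obtain ⟨y₀, hy₀⟩ := eventually_atBot.mp ((tendsto_cdf_atBot μ).eventually_lt_const hu)
  exact ⟨y₀, fun y hy => le_of_not_gt fun hlt => (hy₀ y hlt.le).not_ge hy⟩

lemma nonempty_setOf_le_cdf {u : ℝ} (hu : u < 1) : {y | u ≤ cdf μ y}.Nonempty :=
  (((tendsto_cdf_atTop μ).eventually_const_lt hu).exists).imp fun _ => le_of_lt

lemma le_cdf_quantile {u : ℝ} (hu : u < 1) : u ≤ cdf μ (quantile μ u) := by
  have h_gt : ∀ y, quantile μ u < y → u ≤ cdf μ y := fun y hy => by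
    obtain ⟨s, hs, hsy⟩ := exists_lt_of_csInf_lt (nonempty_setOf_le_cdf μ hu) hy
    exact hs.trans (monotone_cdf μ hsy.le)
  have h_cont : Tendsto (cdf μ) (𝓝[>] quantile μ u) (𝓝 (cdf μ (quantile μ u))) :=
    ((cdf μ).right_continuous _).mono Ioi_subset_Ici_self
  exact ge_of_tendsto h_cont (eventually_mem_nhdsWithin.mono h_gt)

lemma quantile_le_iff {u : ℝ} (hu : u ∈ Ioo 0 1) (y : ℝ) :
    quantile μ u ≤ y ↔ u ≤ cdf μ y :=
  ⟨fun h => (le_cdf_quantile μ hu.2).trans (monotone_cdf μ h),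
    fun h => csInf_le (bddBelow_setOf_le_cdf μ hu.1) h⟩

lemma monotoneOn_quantile : MonotoneOn (quantile μ) (Ioo 0 1) :=
  fun _ hu _ hv huv => csInf_le_csInf (bddBelow_setOf_le_cdf μ hu.1)
    (nonempty_setOf_le_cdf μ hv.2) fun _ hy => huv.trans hy

lemma aemeasurable_quantile : AEMeasurable (quantile μ) (volume.restrict (Ioo 0 1)) :=
  aemeasurable_restrict_of_monotoneOn measurableSet_Ioo (monotoneOn_quantile μ)

lemma preimage_quantile_Iic_inter_Ioo_ae_eq (y : ℝ) :
    (quantile μ ⁻¹' Iic y ∩ Ioo 0 1 : Set ℝ) =ᵐ[volume] Ioc 0 (cdf μ y) := by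
  have h : quantile μ ⁻¹' Iic y ∩ Ioo 0 1 = Iic (cdf μ y) ∩ Ioo 0 1 := by
    ext u
    simp only [mem_inter_iff, mem_preimage, mem_Iic, and_congr_left_iff]
    exact fun hu => quantile_le_iff μ hu y
  rw [h]
  exact Iic_inter_Ioo_ae_eq_Ioc (cdf_le_one μ y)

theorem map_quantile [IsProbabilityMeasure μ] :
    (volume.restrict (Ioo 0 1)).map (quantile μ) = μ := by
  refine Measure.ext_of_Iic _ _ fun y => ?_
  rw [Measure.map_apply_of_aemeasurable (aemeasurable_quantile μ) measurableSet_Iic,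
    Measure.restrict_apply' measurableSet_Ioo,
    measure_congr (preimage_quantile_Iic_inter_Ioo_ae_eq μ y), Real.volume_Ioc, sub_zero,
    ofReal_cdf]

theorem intervalIntegral_quantile_cdf [IsProbabilityMeasure μ] (c : ℝ) :
    ∫ u in 0..cdf μ c, quantile μ u = ∫ x in Iic c, x ∂μ := by
  calc ∫ u in 0..cdf μ c, quantile μ u
      = ∫ u in Ioc 0 (cdf μ c), quantile μ u :=
        intervalIntegral.integral_of_le (cdf_nonneg μ c)
    _ = ∫ u in quantile μ ⁻¹' Iic c ∩ Ioo 0 1, quantile μ u :=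
        setIntegral_congr_set (preimage_quantile_Iic_inter_Ioo_ae_eq μ c).symm
    _ = ∫ u in quantile μ ⁻¹' Iic c, quantile μ u ∂(volume.restrict (Ioo 0 1)) := by
        rw [Measure.restrict_restrict' measurableSet_Ioo]
    _ = ∫ x in Iic c, x ∂((volume.restrict (Ioo 0 1)).map (quantile μ)) :=
        (setIntegral_map measurableSet_Iic aestronglyMeasurable_id
          (aemeasurable_quantile μ)).symm
    _ = ∫ x in Iic c, x ∂μ := by rw [map_quantile]

section RandomVariable

variable {Ω : Type*} [MeasurableSpace Ω] {P : Measure Ω} [IsProbabilityMeasure P]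
  {Z : Ω → ℝ}

lemma cdf_map (hZ : AEMeasurable Z P) (y : ℝ) :
    cdf (P.map Z) y = (P {ω | Z ω ≤ y}).toReal := by
  have := Measure.isProbabilityMeasure_map hZ
  rw [cdf_eq_real, measureReal_def, Measure.map_apply_of_aemeasurable hZ measurableSet_Iic]
  rfl

lemma lowerQuantile_eq_quantile_map (hZ : AEMeasurable Z P) (u : ℝ) :
    lowerQuantile P Z u = quantile (P.map Z) u := by
  simp only [lowerQuantile, quantile, cdf_map hZ]

end RandomVariable

end ProbabilityTheory

open ProbabilityTheory in
theorem stmt5_general {Ω : Type*} [MeasurableSpace Ω] (P : Measure Ω) [IsProbabilityMeasure P]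
    (Z : Ω → ℝ) (hZ : Integrable Z P) (α : ℝ)
    (hq : (P {ω | Z ω ≤ lowerQuantile P Z α}).toReal = α) :
    cvar P Z α =
      (1 / α) * ∫ ω in {ω | Z ω ≤ lowerQuantile P Z α}, Z ω ∂P := by
  have hZm := hZ.aemeasurable
  have := Measure.isProbabilityMeasure_map hZm
  set c := lowerQuantile P Z α
  have hc : cdf (P.map Z) c = α := (cdf_map hZm c).trans hq
  rw [cvar]
  congr 1
  calc ∫ u in 0..α, lowerQuantile P Z u
      = ∫ u in 0..cdf (P.map Z) c, quantile (P.map Z) u := by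
        simp only [hc, lowerQuantile_eq_quantile_map hZm]
    _ = ∫ x in Iic c, x ∂(P.map Z) := intervalIntegral_quantile_cdf _ c
    _ = ∫ ω in {ω | Z ω ≤ c}, Z ω ∂P :=
        setIntegral_map measurableSet_Iic aestronglyMeasurable_id hZm

theorem stmt5 {Ω : Type*} [MeasurableSpace Ω] (P : Measure Ω) [IsProbabilityMeasure P]
    (Z : Ω → ℝ) (hZ : Integrable Z P) (α : ℝ) (hα : α ∈ Set.Ioc (0:ℝ) 1)
    (hq : (P {ω | Z ω ≤ lowerQuantile P Z α}).toReal = α) :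
    cvar P Z α =
      (1 / α) * ∫ ω in {ω | Z ω ≤ lowerQuantile P Z α}, Z ω ∂P :=
  stmt5_general P Z hZ α hq
end

section
/- Let Y be an integrable real-valued random variable on a probability space (Ω, P), let q ∈ ℝ, and let E be a measurable event with P(E) = P({Y ≤ q}). Then ∫_E Y dP ≥ ∫_{{Y ≤ q}} Y dP; that is, among all events of the same probability as the lower-tail event {Y ≤ q}, the lower-tail event minimizes the integral of Y. -/
/-!
Write `A = {f ≤ q}`. Splitting both integrals along `s ∩ A`, it suffices to compare `f` on
`A \ s` and on `s \ A`. These two sets have the same measure because `s` and `A` do, and `f ≤ q`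
on the first while `f > q` on the second, so `∫_{A \ s} f ≤ q μ(A \ s) = q μ(s \ A) ≤ ∫_{s \ A} f`.
-/

open MeasureTheory

theorem setIntegral_sublevel_le_of_measure_eq {Ω : Type*} [MeasurableSpace Ω] {μ : Measure Ω}
    [IsFiniteMeasure μ] {f : Ω → ℝ} (hf : Integrable f μ) (q : ℝ) {s : Set Ω}
    (hs : NullMeasurableSet s μ) (hμs : μ s = μ {x | f x ≤ q}) :
    ∫ x in {x | f x ≤ q}, f x ∂μ ≤ ∫ x in s, f x ∂μ := by
  set A := {x | f x ≤ q}
  have hA : NullMeasurableSet A μ := hf.1.nullMeasurableSet_le aestronglyMeasurable_const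
  have hdiff : μ.real (A \ s) = μ.real (s \ A) := by
    rw [measureReal_def, measureReal_def, measure_sdiff_symm hA hs hμs.symm (measure_ne_top _ _)]
  have below : ∫ x in A \ s, f x ∂μ ≤ ∫ _ in A \ s, q ∂μ :=
    setIntegral_mono_on₀ hf.integrableOn (integrableOn_const (measure_ne_top _ _)) (hA.diff hs)
      fun _ hx => hx.1
  have above : ∫ _ in s \ A, q ∂μ ≤ ∫ x in s \ A, f x ∂μ :=
    setIntegral_mono_on₀ (integrableOn_const (measure_ne_top _ _)) hf.integrableOn (hs.diff hA)
      fun _ hx => (not_le.1 hx.2).le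
  rw [setIntegral_const, hdiff, ← setIntegral_const] at below
  rw [← integral_inter_add_sdiff₀ hs (hf.integrableOn (s := A)),
    ← integral_inter_add_sdiff₀ hA (hf.integrableOn (s := s)), Set.inter_comm]
  linarith

theorem stmt6 {Ω : Type*} [MeasurableSpace Ω] (P : Measure Ω) [IsProbabilityMeasure P]
    (Y : Ω → ℝ) (hY : Integrable Y P) (q : ℝ)
    (E : Set Ω) (hE : MeasurableSet E) (hPE : P E = P {ω | Y ω ≤ q}) :
    ∫ ω in E, Y ω ∂P ≥ ∫ ω in {ω | Y ω ≤ q}, Y ω ∂P :=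
  setIntegral_sublevel_le_of_measure_eq hY q hE.nullMeasurableSet hPE
end

section
/- Let X and Y be integrable real-valued random variables on a common probability space (Ω, P), let α ∈ (0,1], and let q_X, q_Y ∈ ℝ be such that P(X ≤ q_X) = α and P(Y ≤ q_Y) = α. Then (1/α)·E[X·1_{X ≤ q_X}] ≥ (1/α)·E[Y·1_{Y ≤ q_Y}] − E[|X − Y|]/α; that is, the lower-tail CVaR of X is at least the lower-tail CVaR of Y minus E[|X − Y|]/α. -/
/-! Both sides are compared on the set `A = {X ≤ qX}`. Replacing `X` by `Y` there costs at most
`E|X - Y|`, and by the bathtub principle `{Y ≤ qY}` minimises `∫_S Y` among sets `S` of its own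
measure, in particular `∫_{Y ≤ qY} Y ≤ ∫_A Y`. -/

open MeasureTheory

section Bathtub

variable {Ω : Type*} [MeasurableSpace Ω] {μ : Measure Ω} [IsFiniteMeasure μ] {Y : Ω → ℝ}

/-- `Y - q` is nonpositive exactly on `{Y ≤ q}`, so that set minimises `∫_S (Y - q)`. -/
lemma setIntegral_sublevel_sub_const_le (hY : Integrable Y μ) (q : ℝ) {S : Set Ω}
    (hS : NullMeasurableSet S μ) :
    ∫ ω in {ω | Y ω ≤ q}, (Y ω - q) ∂μ ≤ ∫ ω in S, (Y ω - q) ∂μ := by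
  have hB : NullMeasurableSet {ω | Y ω ≤ q} μ :=
    hY.aemeasurable.nullMeasurable measurableSet_Iic
  have hg : Integrable (fun ω => Y ω - q) μ := hY.sub (integrable_const q)
  rw [← integral_indicator₀ hB, ← integral_indicator₀ hS]
  refine integral_mono (hg.indicator₀ hB) (hg.indicator₀ hS) fun ω => ?_
  by_cases hωB : Y ω ≤ q <;> by_cases hωS : ω ∈ S <;>
    simp only [Set.indicator, Set.mem_ofPred_eq, hωB, hωS, if_true, if_false] <;> linarith

theorem setIntegral_sublevel_le_of_measure_eq_s7 (hY : Integrable Y μ) (q : ℝ) {S : Set Ω}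
    (hS : NullMeasurableSet S μ) (hμS : μ S = μ {ω | Y ω ≤ q}) :
    ∫ ω in {ω | Y ω ≤ q}, Y ω ∂μ ≤ ∫ ω in S, Y ω ∂μ := by
  have h := setIntegral_sublevel_sub_const_le hY q hS
  rw [integral_sub hY.integrableOn (integrable_const q), integral_sub hY.integrableOn
    (integrable_const q), setIntegral_const, setIntegral_const, measureReal_def, measureReal_def, hμS] at h
  linarith

end Bathtub

lemma abs_setIntegral_sub_setIntegral_le {Ω : Type*} [MeasurableSpace Ω] {μ : Measure Ω}
    {X Y : Ω → ℝ} (hX : Integrable X μ) (hY : Integrable Y μ) (A : Set Ω) :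
    |∫ ω in A, X ω ∂μ - ∫ ω in A, Y ω ∂μ| ≤ ∫ ω, |X ω - Y ω| ∂μ :=
  calc |∫ ω in A, X ω ∂μ - ∫ ω in A, Y ω ∂μ| = |∫ ω in A, (X ω - Y ω) ∂μ| := by
        rw [integral_sub hX.integrableOn hY.integrableOn]
    _ ≤ ∫ ω in A, |X ω - Y ω| ∂μ := abs_integral_le_integral_abs
    _ ≤ ∫ ω, |X ω - Y ω| ∂μ :=
        setIntegral_le_integral (hX.sub hY).abs (ae_of_all _ fun _ => abs_nonneg _)

theorem stmt7_general {Ω : Type*} [MeasurableSpace Ω] (P : Measure Ω) [IsProbabilityMeasure P]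
    (X Y : Ω → ℝ) (hX : Integrable X P) (hY : Integrable Y P)
    (α : ℝ) (qX qY : ℝ)
    (hqX : (P {ω | X ω ≤ qX}).toReal = α)
    (hqY : (P {ω | Y ω ≤ qY}).toReal = α) :
    (1 / α) * ∫ ω in {ω | X ω ≤ qX}, X ω ∂P ≥
      (1 / α) * (∫ ω in {ω | Y ω ≤ qY}, Y ω ∂P) -
        (∫ ω, |X ω - Y ω| ∂P) / α := by
  have hA : NullMeasurableSet {ω | X ω ≤ qX} P :=
    hX.aemeasurable.nullMeasurable measurableSet_Iic
  have hμA : P {ω | X ω ≤ qX} = P {ω | Y ω ≤ qY} :=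
    (ENNReal.toReal_eq_toReal_iff' (measure_ne_top _ _) (measure_ne_top _ _)).mp
      (hqX.trans hqY.symm)
  have hbathtub := setIntegral_sublevel_le_of_measure_eq_s7 hY qY hA hμA
  have hclose := (abs_le.mp (abs_setIntegral_sub_setIntegral_le hX hY {ω | X ω ≤ qX})).1
  have hα : 0 ≤ 1 / α := by rw [← hqX]; positivity
  rw [ge_iff_le, div_eq_mul_one_div (∫ ω, |X ω - Y ω| ∂P), mul_comm _ (1 / α), ← mul_sub]
  exact mul_le_mul_of_nonneg_left (by linarith) hα

theorem stmt7 {Ω : Type*} [MeasurableSpace Ω] (P : Measure Ω) [IsProbabilityMeasure P]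
    (X Y : Ω → ℝ) (hX : Integrable X P) (hY : Integrable Y P)
    (α : ℝ) (hα : α ∈ Set.Ioc (0:ℝ) 1) (qX qY : ℝ)
    (hqX : (P {ω | X ω ≤ qX}).toReal = α)
    (hqY : (P {ω | Y ω ≤ qY}).toReal = α) :
    (1 / α) * ∫ ω in {ω | X ω ≤ qX}, X ω ∂P ≥
      (1 / α) * (∫ ω in {ω | Y ω ≤ qY}, Y ω ∂P) -
        (∫ ω, |X ω - Y ω| ∂P) / α :=
  stmt7_general P X Y hX hY α qX qY hqX hqY
end

section
/- Let X and Y be integrable real-valued random variables on a common probability space (Ω, P), let α ∈ (0,1], let d_C ≥ 0 with E[|X − Y|] ≤ d_C, and let q_X, q_Y ∈ ℝ be such that P(X ≤ q_X) = α and P(Y ≤ q_Y) = α. Then the lower-tail CVaRs of X and Y differ by at most d_C/α: |(1/α)·E[X·1_{X ≤ q_X}] − (1/α)·E[Y·1_{Y ≤ q_Y}]| ≤ d_C/α. -/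
/-!
The lower tail `{Z ≤ q}` minimises `∫_S Z` among sets `S` of its measure: trading `S \ {Z ≤ q}`,
where `Z ≥ q`, for the equally large `{Z ≤ q} \ S`, where `Z ≤ q`, can only lower the integral.
Hence `∫_{X ≤ qX} X ≤ ∫_{Y ≤ qY} X ≤ ∫_{Y ≤ qY} Y + E|X - Y|`, and symmetrically.
-/

open MeasureTheory

namespace MeasureTheory

variable {Ω : Type*} [MeasurableSpace Ω] {μ : Measure Ω} {Z : Ω → ℝ}

lemma setIntegral_le_setIntegral_of_measure_eq [IsFiniteMeasure μ] {A S : Set Ω} {q : ℝ}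
    (hZ : Integrable Z μ) (hA : NullMeasurableSet A μ) (hS : NullMeasurableSet S μ)
    (hμ : μ A = μ S) (hle : ∀ ω ∈ A \ S, Z ω ≤ q) (hge : ∀ ω ∈ S \ A, q ≤ Z ω) :
    ∫ ω in A, Z ω ∂μ ≤ ∫ ω in S, Z ω ∂μ := by
  have hsdiff : μ.real (A \ S) = μ.real (S \ A) := by
    simp only [measureReal_def, measure_sdiff_symm hA hS hμ (measure_ne_top μ _)]
  have hAS : ∫ ω in A \ S, Z ω ∂μ ≤ q * μ.real (A \ S) := by
    simpa [setIntegral_const, mul_comm] using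
      setIntegral_mono_on₀ hZ.integrableOn (integrableOn_const (measure_ne_top μ _))
        (hA.diff hS) hle
  have hSA : q * μ.real (S \ A) ≤ ∫ ω in S \ A, Z ω ∂μ := by
    simpa [setIntegral_const, mul_comm] using
      setIntegral_mono_on₀ (integrableOn_const (measure_ne_top μ _)) hZ.integrableOn
        (hS.diff hA) hge
  calc ∫ ω in A, Z ω ∂μ
      = ∫ ω in A ∩ S, Z ω ∂μ + ∫ ω in A \ S, Z ω ∂μ :=
        (integral_inter_add_sdiff₀ hS hZ.integrableOn).symm
    _ ≤ ∫ ω in S ∩ A, Z ω ∂μ + ∫ ω in S \ A, Z ω ∂μ := by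
        rw [Set.inter_comm]; linarith [hsdiff ▸ hAS]
    _ = ∫ ω in S, Z ω ∂μ := integral_inter_add_sdiff₀ hA hZ.integrableOn

lemma setIntegral_setOf_le_le_setIntegral [IsFiniteMeasure μ] {S : Set Ω} (q : ℝ)
    (hZ : Integrable Z μ) (hS : NullMeasurableSet S μ) (hμ : μ {ω | Z ω ≤ q} = μ S) :
    ∫ ω in {ω | Z ω ≤ q}, Z ω ∂μ ≤ ∫ ω in S, Z ω ∂μ :=
  setIntegral_le_setIntegral_of_measure_eq hZ
    (hZ.aemeasurable.nullMeasurableSet_preimage measurableSet_Iic) hS hμ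
    (fun _ hω ↦ hω.1) (fun _ hω ↦ le_of_lt (not_le.mp hω.2))

lemma abs_setIntegral_sub_setIntegral_le {X Y : Ω → ℝ} (hX : Integrable X μ)
    (hY : Integrable Y μ) (S : Set Ω) :
    |∫ ω in S, X ω ∂μ - ∫ ω in S, Y ω ∂μ| ≤ ∫ ω, |X ω - Y ω| ∂μ := by
  rw [← integral_sub hX.integrableOn hY.integrableOn]
  calc |∫ ω in S, (X ω - Y ω) ∂μ| ≤ ∫ ω in S, |X ω - Y ω| ∂μ :=
        abs_integral_le_integral_abs
    _ ≤ ∫ ω, |X ω - Y ω| ∂μ :=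
        setIntegral_le_integral (hX.sub hY).abs (Filter.Eventually.of_forall fun _ ↦ abs_nonneg _)

lemma abs_setIntegral_setOf_le_sub_setIntegral_setOf_le [IsFiniteMeasure μ] {X Y : Ω → ℝ}
    (hX : Integrable X μ) (hY : Integrable Y μ) {qX qY : ℝ}
    (hμ : μ {ω | X ω ≤ qX} = μ {ω | Y ω ≤ qY}) :
    |∫ ω in {ω | X ω ≤ qX}, X ω ∂μ - ∫ ω in {ω | Y ω ≤ qY}, Y ω ∂μ| ≤
      ∫ ω, |X ω - Y ω| ∂μ := by
  have hXmin := setIntegral_setOf_le_le_setIntegral (S := {ω | Y ω ≤ qY}) qX hX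
    (hY.aemeasurable.nullMeasurableSet_preimage measurableSet_Iic) hμ
  have hYmin := setIntegral_setOf_le_le_setIntegral (S := {ω | X ω ≤ qX}) qY hY
    (hX.aemeasurable.nullMeasurableSet_preimage measurableSet_Iic) hμ.symm
  have hA := abs_le.mp (abs_setIntegral_sub_setIntegral_le hX hY {ω | X ω ≤ qX})
  have hB := abs_le.mp (abs_setIntegral_sub_setIntegral_le hX hY {ω | Y ω ≤ qY})
  rw [abs_le]
  constructor <;> linarith [hA.1, hB.2]

end MeasureTheory

theorem stmt8_general {Ω : Type*} [MeasurableSpace Ω] (P : Measure Ω) [IsProbabilityMeasure P]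
    (X Y : Ω → ℝ) (hX : Integrable X P) (hY : Integrable Y P)
    (α : ℝ)
    (dC : ℝ) (hMAD : ∫ ω, |X ω - Y ω| ∂P ≤ dC)
    (qX qY : ℝ)
    (hqX : (P {ω | X ω ≤ qX}).toReal = α)
    (hqY : (P {ω | Y ω ≤ qY}).toReal = α) :
    |(1 / α) * (∫ ω in {ω | X ω ≤ qX}, X ω ∂P) -
      (1 / α) * (∫ ω in {ω | Y ω ≤ qY}, Y ω ∂P)| ≤ dC / α := by
  have hμ : P {ω | X ω ≤ qX} = P {ω | Y ω ≤ qY} :=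
    (ENNReal.toReal_eq_toReal_iff' (measure_ne_top P _) (measure_ne_top P _)).mp (hqX.trans hqY.symm)
  have hα : 0 ≤ α := hqX ▸ ENNReal.toReal_nonneg
  rw [← mul_sub, abs_mul, abs_of_nonneg (one_div_nonneg.mpr hα), mul_comm, ← div_eq_mul_one_div]
  exact div_le_div_of_nonneg_right
    ((abs_setIntegral_setOf_le_sub_setIntegral_setOf_le hX hY hμ).trans hMAD) hα

theorem stmt8 {Ω : Type*} [MeasurableSpace Ω] (P : Measure Ω) [IsProbabilityMeasure P]
    (X Y : Ω → ℝ) (hX : Integrable X P) (hY : Integrable Y P)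
    (α : ℝ) (hα : α ∈ Set.Ioc (0:ℝ) 1)
    (dC : ℝ) (hdC : 0 ≤ dC) (hMAD : ∫ ω, |X ω - Y ω| ∂P ≤ dC)
    (qX qY : ℝ)
    (hqX : (P {ω | X ω ≤ qX}).toReal = α)
    (hqY : (P {ω | Y ω ≤ qY}).toReal = α) :
    |(1 / α) * (∫ ω in {ω | X ω ≤ qX}, X ω ∂P) -
      (1 / α) * (∫ ω in {ω | Y ω ≤ qY}, Y ω ∂P)| ≤ dC / α :=
  stmt8_general P X Y hX hY α dC hMAD qX qY hqX hqY
end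

section
/- Let O_1, …, O_n and R_1, …, R_m be integrable real-valued random variables on a common probability space, let λ : {1,…,n} → {1,…,m} be a map, and let d_o ≥ 0 be such that E[|O_i − R_{λ(i)}|] ≤ d_o for every i. Let x_1, …, x_n be nonnegative integers with Σ_{i=1}^n x_i ≤ P_max, and set ω* = Σ_{i=1}^n x_i·E[O_i] and ω_s = Σ_{i=1}^n x_i·E[R_{λ(i)}]. Then ω_s ≥ ω* − d_o·P_max. Consequently, for any ε ∈ [0,1] and any reals ω_sk, ω̄, ω with ω_sk ≥ ω_s, ω̄ ≥ (1−ε)·ω_sk, and ω ≥ (1−ε)·ω̄, one has ω ≥ (1−ε)²·(ω* − d_o·P_max). -/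
open MeasureTheory

theorem integral_sub_integral_le_integral_abs_sub {Ω : Type*} [MeasurableSpace Ω]
    {μ : Measure Ω} {f g : Ω → ℝ} (hf : Integrable f μ) (hg : Integrable g μ) :
    ∫ ω, f ω ∂μ - ∫ ω, g ω ∂μ ≤ ∫ ω, |f ω - g ω| ∂μ :=
  calc ∫ ω, f ω ∂μ - ∫ ω, g ω ∂μ = ∫ ω, f ω - g ω ∂μ := (integral_sub hf hg).symm
    _ ≤ |∫ ω, f ω - g ω ∂μ| := le_abs_self _
    _ ≤ ∫ ω, |f ω - g ω| ∂μ := abs_integral_le_integral_abs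

theorem Finset.sum_mul_sub_sum_mul_le {ι : Type*} (s : Finset ι) {w a b : ι → ℝ} {d W : ℝ}
    (hw : ∀ i ∈ s, 0 ≤ w i) (hab : ∀ i ∈ s, a i - b i ≤ d) (hd : 0 ≤ d)
    (hW : ∑ i ∈ s, w i ≤ W) :
    ∑ i ∈ s, w i * a i - ∑ i ∈ s, w i * b i ≤ d * W :=
  calc ∑ i ∈ s, w i * a i - ∑ i ∈ s, w i * b i = ∑ i ∈ s, w i * (a i - b i) := by
        simp only [mul_sub, Finset.sum_sub_distrib]
    _ ≤ ∑ i ∈ s, w i * d :=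
        Finset.sum_le_sum fun i hi => mul_le_mul_of_nonneg_left (hab i hi) (hw i hi)
    _ = d * ∑ i ∈ s, w i := by rw [← Finset.sum_mul, mul_comm]
    _ ≤ d * W := mul_le_mul_of_nonneg_left hW hd

theorem sq_mul_le_of_le_of_mul_le_of_mul_le {c L a b f : ℝ} (hc : 0 ≤ c) (ha : L ≤ a)
    (hb : c * a ≤ b) (hf : c * b ≤ f) : c ^ 2 * L ≤ f :=
  calc c ^ 2 * L = c * (c * L) := by ring
    _ ≤ c * b := mul_le_mul_of_nonneg_left ((mul_le_mul_of_nonneg_left ha hc).trans hb) hc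
    _ ≤ f := hf

theorem stmt9_general {Ω : Type*} [MeasurableSpace Ω] (P : Measure Ω)
    (n m : ℕ) (O : Fin n → Ω → ℝ) (R : Fin m → Ω → ℝ)
    (hO : ∀ i, Integrable (O i) P) (hR : ∀ j, Integrable (R j) P)
    (lam : Fin n → Fin m) (dO : ℝ) (hdO : 0 ≤ dO)
    (hMAD : ∀ i, ∫ ω, |O i ω - R (lam i) ω| ∂P ≤ dO)
    (x : Fin n → ℕ) (Pmax : ℝ) (hx : (∑ i, (x i : ℝ)) ≤ Pmax)
    (ωstar ωs : ℝ)
    (hωstar : ωstar = ∑ i, (x i : ℝ) * ∫ ω, O i ω ∂P)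
    (hωs : ωs = ∑ i, (x i : ℝ) * ∫ ω, R (lam i) ω ∂P) :
    ωs ≥ ωstar - dO * Pmax ∧
    ∀ ε : ℝ, ε ∈ Set.Icc (0:ℝ) 1 → ∀ ωsk ωbar ωfin : ℝ,
      ωsk ≥ ωs → ωbar ≥ (1 - ε) * ωsk → ωfin ≥ (1 - ε) * ωbar →
      ωfin ≥ (1 - ε) ^ 2 * (ωstar - dO * Pmax) := by
  have hsketch : ωstar - dO * Pmax ≤ ωs := by
    have hgap : ωstar - ωs ≤ dO * Pmax := by
      rw [hωstar, hωs]
      exact Finset.sum_mul_sub_sum_mul_le _ (fun i _ => Nat.cast_nonneg _)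
        (fun i _ => (integral_sub_integral_le_integral_abs_sub (hO i) (hR (lam i))).trans
          (hMAD i)) hdO hx
    linarith
  refine ⟨hsketch, fun ε hε ωsk ωbar ωfin hsk hbar hfin => ?_⟩
  exact sq_mul_le_of_le_of_mul_le_of_mul_le (sub_nonneg.mpr hε.2) (hsketch.trans hsk) hbar hfin

theorem stmt9 {Ω : Type*} [MeasurableSpace Ω] (P : Measure Ω) [IsProbabilityMeasure P]
    (n m : ℕ) (O : Fin n → Ω → ℝ) (R : Fin m → Ω → ℝ)
    (hO : ∀ i, Integrable (O i) P) (hR : ∀ j, Integrable (R j) P)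
    (lam : Fin n → Fin m) (dO : ℝ) (hdO : 0 ≤ dO)
    (hMAD : ∀ i, ∫ ω, |O i ω - R (lam i) ω| ∂P ≤ dO)
    (x : Fin n → ℕ) (Pmax : ℝ) (hx : (∑ i, (x i : ℝ)) ≤ Pmax)
    (ωstar ωs : ℝ)
    (hωstar : ωstar = ∑ i, (x i : ℝ) * ∫ ω, O i ω ∂P)
    (hωs : ωs = ∑ i, (x i : ℝ) * ∫ ω, R (lam i) ω ∂P) :
    ωs ≥ ωstar - dO * Pmax ∧
    ∀ ε : ℝ, ε ∈ Set.Icc (0:ℝ) 1 → ∀ ωsk ωbar ωfin : ℝ,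
      ωsk ≥ ωs → ωbar ≥ (1 - ε) * ωsk → ωfin ≥ (1 - ε) * ωbar →
      ωfin ≥ (1 - ε) ^ 2 * (ωstar - dO * Pmax) :=
  stmt9_general P n m O R hO hR lam dO hdO hMAD x Pmax hx ωstar ωs hωstar hωs
end

section
/- Let s ≥ 1 be an integer and let U_1, …, U_s be independent random variables, each uniformly distributed on [0,1]. Then for every real t ≥ 0, P(Σ_{i=1}^s U_i ≤ t) = (1/s!)·Σ_{k=0}^{⌊t⌋} (−1)^k·C(s,k)·(t−k)^s (the Irwin–Hall cumulative distribution function formula, where C(s,k) denotes the binomial coefficient and C(s,k) = 0 for k > s). -/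
/-!
Write `F_n` for the distribution function of `U_1 + ⋯ + U_n`. By independence the law of
`U_1 + ⋯ + U_{n+1}` is the convolution of the law of `U_1 + ⋯ + U_n` with the uniform law, so
`F_{n+1} t = ∫_{t-1}^t F_n`, with `F_1 t = max t 0 - max (t - 1) 0`. The truncated power sums
`∑ₖ (-1)^k C(n,k) max (x - k) 0 ^ m` satisfy the same recursion: integrating raises `m` by one,
and the difference operator `x ↦ x - 1` turns the coefficients `C(n,k)` into `C(n+1,k)` by
Pascal's rule. For `t ≥ 0` the terms with `k > ⌊t⌋` vanish, which gives the stated formula.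
-/

open MeasureTheory ProbabilityTheory Finset

lemma hasDerivAt_max_zero_pow {n : ℕ} (hn : n ≠ 0) (x : ℝ) :
    HasDerivAt (fun y : ℝ => max y 0 ^ (n + 1)) ((n + 1) * max x 0 ^ n) x := by
  rcases lt_trichotomy x 0 with hx | rfl | hx
  · have hzero : (fun y : ℝ => max y 0 ^ (n + 1)) =ᶠ[nhds x] fun _ => 0 := by
      filter_upwards [Iio_mem_nhds hx] with y hy
      simp [max_eq_right (Set.mem_Iio.mp hy).le]
    simpa [max_eq_right hx.le, hn] using (hasDerivAt_const x (0 : ℝ)).congr_of_eventuallyEq hzero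
  · have hleft : HasDerivWithinAt (fun y : ℝ => max y 0 ^ (n + 1)) 0 (Set.Iic 0) 0 :=
      (hasDerivWithinAt_const _ _ (0 : ℝ)).congr
        (fun y hy => by simp [max_eq_right (Set.mem_Iic.mp hy)]) (by simp)
    have hright : HasDerivWithinAt (fun y : ℝ => max y 0 ^ (n + 1)) 0 (Set.Ici 0) 0 := by
      have := (hasDerivAt_pow (n + 1) (0 : ℝ)).hasDerivWithinAt (s := Set.Ici 0)
      rw [Nat.add_sub_cancel, zero_pow hn, mul_zero] at this
      exact this.congr (fun y hy => by simp [max_eq_left (Set.mem_Ici.mp hy)]) (by simp)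
    have := hleft.union hright
    rw [Set.Iic_union_Ici, hasDerivWithinAt_univ] at this
    simpa [hn] using this
  · have hpow : (fun y : ℝ => max y 0 ^ (n + 1)) =ᶠ[nhds x] fun y => y ^ (n + 1) := by
      filter_upwards [Ioi_mem_nhds hx] with y hy
      simp [max_eq_left (Set.mem_Ioi.mp hy).le]
    simpa [max_eq_left hx.le] using (hasDerivAt_pow (n + 1) x).congr_of_eventuallyEq hpow

lemma sum_range_alternating_choose_sub_shift {R : Type*} [CommRing R] (n : ℕ) (f : ℕ → R) :
    ∑ k ∈ range (n + 1), (-1) ^ k * (n.choose k : R) * f k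
      - ∑ k ∈ range (n + 1), (-1) ^ k * (n.choose k : R) * f (k + 1)
    = ∑ k ∈ range (n + 2), (-1) ^ k * ((n + 1).choose k : R) * f k := by
  have hpascal : ∀ k ∈ range (n + 1),
      (-1) ^ (k + 1) * ((n + 1).choose (k + 1) : R) * f (k + 1)
        = (-1) ^ (k + 1) * (n.choose (k + 1) : R) * f (k + 1)
          - (-1) ^ k * (n.choose k : R) * f (k + 1) := by
    intro k _
    rw [Nat.choose_succ_succ]
    push_cast
    ring
  rw [sum_range_succ' _ (n + 1), sum_range_succ' _ n, sum_congr rfl hpascal, sum_sub_distrib,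
    sum_range_succ (fun k => (-1) ^ (k + 1) * (n.choose (k + 1) : R) * f (k + 1)) n]
  simp only [pow_zero, Nat.choose_zero_right, Nat.cast_one, mul_one, one_mul, Nat.choose_succ_self,
    Nat.cast_zero, mul_zero, zero_mul, add_zero]
  ring

noncomputable def irwinHallSum (n m : ℕ) (x : ℝ) : ℝ :=
  ∑ k ∈ range (n + 1), (-1) ^ k * (n.choose k : ℝ) * max (x - k) 0 ^ m

noncomputable def irwinHallCdf (n : ℕ) (x : ℝ) : ℝ :=
  (n.factorial : ℝ)⁻¹ * irwinHallSum n n x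

lemma continuous_irwinHallSum (n m : ℕ) : Continuous (irwinHallSum n m) := by
  unfold irwinHallSum
  fun_prop

lemma hasDerivAt_irwinHallSum (n : ℕ) {m : ℕ} (hm : m ≠ 0) (x : ℝ) :
    HasDerivAt (irwinHallSum n (m + 1)) ((m + 1) * irwinHallSum n m x) x := by
  unfold irwinHallSum
  rw [mul_sum]
  refine HasDerivAt.fun_sum fun k _ => ?_
  have hterm := (hasDerivAt_max_zero_pow hm (x - k)).comp x ((hasDerivAt_id x).sub_const (k : ℝ))
  exact (hterm.const_mul ((-1) ^ k * (n.choose k : ℝ))).congr_deriv (by ring)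

lemma irwinHallSum_sub_irwinHallSum_sub_one (n m : ℕ) (x : ℝ) :
    irwinHallSum n m x - irwinHallSum n m (x - 1) = irwinHallSum (n + 1) m x := by
  have hshift : ∀ k : ℕ, max (x - 1 - k) 0 ^ m = max (x - ↑(k + 1)) 0 ^ m := fun k => by
    rw [Nat.cast_succ, sub_sub, add_comm (1 : ℝ)]
  simp only [irwinHallSum, hshift]
  exact sum_range_alternating_choose_sub_shift n (fun k => max (x - k) 0 ^ m)

lemma integral_irwinHallCdf_sub {n : ℕ} (hn : n ≠ 0) (t : ℝ) :
    ∫ u in (0 : ℝ)..1, irwinHallCdf n (t - u) = irwinHallCdf (n + 1) t := by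
  have hftc : ∫ x in t - 1..t, ((n : ℝ) + 1) * irwinHallSum n n x
      = irwinHallSum (n + 1) (n + 1) t := by
    rw [intervalIntegral.integral_eq_sub_of_hasDerivAt (fun x _ => hasDerivAt_irwinHallSum n hn x)
      ((continuous_const.mul (continuous_irwinHallSum n n)).intervalIntegrable _ _),
      irwinHallSum_sub_irwinHallSum_sub_one]
  have hfac : ((n + 1).factorial : ℝ)⁻¹ * ((n : ℝ) + 1) = (n.factorial : ℝ)⁻¹ := by
    rw [Nat.factorial_succ]
    push_cast
    field_simp
  rw [intervalIntegral.integral_comp_sub_left (irwinHallCdf n) t, sub_zero]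
  unfold irwinHallCdf
  rw [← hftc, intervalIntegral.integral_const_mul, intervalIntegral.integral_const_mul,
    ← mul_assoc, hfac]

lemma irwinHallCdf_one (x : ℝ) : irwinHallCdf 1 x = max x 0 - max (x - 1) 0 := by
  simp only [irwinHallCdf, irwinHallSum, Nat.factorial_one, Nat.cast_one, inv_one, one_mul,
    Nat.reduceAdd, pow_one, sum_range_succ, range_one, sum_singleton, pow_zero, Nat.choose_self,
    Nat.choose_succ_self_right, zero_add, mul_one, CharP.cast_eq_zero, sub_zero, neg_mul]
  ring

lemma irwinHallCdf_eq_sum_range_floor {n : ℕ} (hn : n ≠ 0) {t : ℝ} (ht : 0 ≤ t) :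
    irwinHallCdf n t = (1 / (n.factorial : ℝ)) *
      ∑ k ∈ range (⌊t⌋₊ + 1), (-1 : ℝ) ^ k * (n.choose k : ℝ) * (t - k) ^ n := by
  set f : ℕ → ℝ := fun k => (-1) ^ k * (n.choose k : ℝ) * max (t - k) 0 ^ n
  have hvanish : ∀ k, n < k ∨ ⌊t⌋₊ < k → f k = 0 := by
    rintro k (hk | hk)
    · simp [f, Nat.choose_eq_zero_of_lt hk]
    · simp [f, max_eq_right (sub_nonpos.mpr ((Nat.floor_lt ht).mp hk).le), hn]
  have hextend : ∀ a b : ℕ, (∀ k, a ≤ k → f k = 0) → a ≤ b →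
      ∑ k ∈ range a, f k = ∑ k ∈ range b, f k := fun a b hf hab =>
    sum_subset (range_subset_range.mpr hab) fun k _ hk => hf k (by simpa using hk)
  have hfloor : ∀ k ∈ range (⌊t⌋₊ + 1), (-1 : ℝ) ^ k * (n.choose k : ℝ) * (t - k) ^ n = f k :=
    fun k hk => by
      have hkt : (k : ℝ) ≤ t := (Nat.le_floor_iff ht).mp (Nat.lt_succ_iff.mp (mem_range.mp hk))
      simp [f, max_eq_left (sub_nonneg.mpr hkt)]
  rw [irwinHallCdf, irwinHallSum, one_div, sum_congr rfl hfloor]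
  congr 1
  exact (hextend (n + 1) (max n ⌊t⌋₊ + 1) (fun k hk => hvanish k (.inl hk)) (by omega)).trans
    (hextend (⌊t⌋₊ + 1) (max n ⌊t⌋₊ + 1) (fun k hk => hvanish k (.inr hk)) (by omega)).symm

lemma MeasureTheory.Measure.conv_apply_Iic (μ ν : Measure ℝ) [SFinite μ] [SFinite ν] (t : ℝ) :
    (μ ∗ ν) (Set.Iic t) = ∫⁻ y, μ (Set.Iic (t - y)) ∂ν := by
  rw [Measure.conv, Measure.map_apply measurable_add measurableSet_Iic,
    Measure.prod_apply_symm (measurable_add measurableSet_Iic)]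
  congr with y
  congr with x
  simp [le_sub_iff_add_le]

lemma measureReal_conv_restrict_Icc_Iic (μ : Measure ℝ) [IsFiniteMeasure μ] (t : ℝ) :
    (μ ∗ volume.restrict (Set.Icc 0 1)).real (Set.Iic t)
      = ∫ u in (0 : ℝ)..1, μ.real (Set.Iic (t - u)) := by
  have hmeas : Measurable fun u : ℝ => μ (Set.Iic (t - u)) :=
    Antitone.measurable fun a b hab => measure_mono (Set.Iic_subset_Iic.mpr (by linarith))
  rw [measureReal_def, Measure.conv_apply_Iic,
    ← integral_toReal hmeas.aemeasurable (ae_of_all _ fun _ => measure_lt_top _ _),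
    intervalIntegral.integral_of_le zero_le_one, ← integral_Icc_eq_integral_Ioc]
  rfl

lemma restrict_Icc_zero_one_measureReal_Iic (t : ℝ) :
    (volume.restrict (Set.Icc (0 : ℝ) 1)).real (Set.Iic t) = irwinHallCdf 1 t := by
  rw [measureReal_restrict_apply measurableSet_Iic, irwinHallCdf_one]
  have hinter : Set.Iic t ∩ Set.Icc 0 1 = Set.Icc 0 (min t 1) := by
    ext x
    simp only [Set.mem_inter_iff, Set.mem_Iic, Set.mem_Icc, le_min_iff]
    tauto
  rw [hinter, Real.volume_real_Icc, sub_zero]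
  grind

lemma aemeasurable_of_map_eq_restrict_Icc {Ω : Type*} [MeasurableSpace Ω] {P : Measure Ω}
    {X : Ω → ℝ} (h : P.map X = volume.restrict (Set.Icc 0 1)) : AEMeasurable X P :=
  aemeasurable_of_map_neZero (by rw [h]; exact ⟨by simp [Measure.restrict_eq_zero]⟩)

lemma map_sum_measureReal_Iic_eq_irwinHallCdf {Ω ι : Type*} [MeasurableSpace Ω] {P : Measure Ω}
    [IsProbabilityMeasure P] {U : ι → Ω → ℝ} (hindep : iIndepFun U P)
    (hunif : ∀ i, P.map (U i) = volume.restrict (Set.Icc 0 1))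
    {A : Finset ι} (hA : A.Nonempty) (t : ℝ) :
    (P.map (∑ i ∈ A, U i)).real (Set.Iic t) = irwinHallCdf #A t := by
  have hU : ∀ i, AEMeasurable (U i) P := fun i => aemeasurable_of_map_eq_restrict_Icc (hunif i)
  induction hA using Finset.Nonempty.cons_induction generalizing t with
  | singleton i =>
    rw [sum_singleton, hunif i, card_singleton, restrict_Icc_zero_one_measureReal_Iic]
  | cons i A hi hA ih =>
    have hindepA : IndepFun (∑ j ∈ A, U j) (U i) P := hindep.indepFun_finsetSum_of_notMem₀ hU hi
    rw [sum_cons, add_comm,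
      hindepA.map_add_eq_map_conv_map₀ (Finset.aemeasurable_sum _ fun j _ => hU j) (hU i), hunif i,
      measureReal_conv_restrict_Icc_Iic, card_cons]
    simp only [ih]
    exact integral_irwinHallCdf_sub hA.card_ne_zero t

theorem stmt10_general {Ω : Type*} [MeasurableSpace Ω] (P : Measure Ω) [IsProbabilityMeasure P]
    (s : ℕ) (hs : 1 ≤ s) (U : Fin s → Ω → ℝ)
    (hindep : iIndepFun U P)
    (hunif : ∀ i, Measure.map (U i) P = (volume : Measure ℝ).restrict (Set.Icc 0 1))
    (t : ℝ) (ht : 0 ≤ t) :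
    (P {ω | ∑ i, U i ω ≤ t}).toReal =
      (1 / (Nat.factorial s : ℝ)) *
        ∑ k ∈ Finset.range (⌊t⌋₊ + 1),
          (-1 : ℝ) ^ k * (s.choose k : ℝ) * (t - (k : ℝ)) ^ s := by
  have hsum : AEMeasurable (∑ i, U i) P :=
    Finset.aemeasurable_sum _ fun i _ => aemeasurable_of_map_eq_restrict_Icc (hunif i)
  have hlaw :=
    map_sum_measureReal_Iic_eq_irwinHallCdf hindep hunif (univ_nonempty_iff.mpr ⟨⟨0, hs⟩⟩) t
  rw [map_measureReal_apply_of_aemeasurable hsum measurableSet_Iic, card_univ, Fintype.card_fin,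
    irwinHallCdf_eq_sum_range_floor (by omega) ht] at hlaw
  rw [← measureReal_def, ← hlaw]
  congr with ω
  simp

theorem stmt10 {Ω : Type*} [MeasurableSpace Ω] (P : Measure Ω) [IsProbabilityMeasure P]
    (s : ℕ) (hs : 1 ≤ s) (U : Fin s → Ω → ℝ)
    (hmeas : ∀ i, Measurable (U i))
    (hindep : iIndepFun U P)
    (hunif : ∀ i, Measure.map (U i) P = (volume : Measure ℝ).restrict (Set.Icc 0 1))
    (t : ℝ) (ht : 0 ≤ t) :
    (P {ω | ∑ i, U i ω ≤ t}).toReal =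
      (1 / (Nat.factorial s : ℝ)) *
        ∑ k ∈ Finset.range (⌊t⌋₊ + 1),
          (-1 : ℝ) ^ k * (s.choose k : ℝ) * (t - (k : ℝ)) ^ s :=
  stmt10_general P s hs U hindep hunif t ht
end
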